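/- Let ξ, ν ∈ ℝ² with |ξ| = |ν| = 1 and ξ · ν = 0, and let u, v ∈ ℂ². Then Re Σ_{i,j,k,l=1}^2 a_{ij}^{kl} (ξ_l u_j − ν_l v_j) conj(ξ_k u_i − ν_k v_i) ≥ 0, where a_{ij}^{kl} are the principal coefficients of Hibler's operator evaluated at a fixed symmetric ε with P > 0 and δ > 0. -/

import Mathlib

/-!
Writing `z = x + i y` with `x, y` real, the real part of `Σ a_{ij}^{kl} z_{jl} conj z_{ik}` is the
sum of the real quadratic forms `Σ a_{ij}^{kl} d_{ik} d_{jl}` at `d = x` and `d = y`. Since `a` is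
built from the bilinear form `B` of `𝕊` (with `B(d,d) = Δ²(d)`), that quadratic form equals
`P/(2Δ_δ) (B(d,d) − B(ε,d)²/Δ_δ²)`, and Cauchy–Schwarz `B(ε,d)² ≤ Δ²(ε) Δ²(d)` together with
`Δ_δ² = δ + Δ²(ε)` bounds it below by `Pδ/(2Δ_δ³) Δ²(d) ≥ 0`.
-/

open Finset Real Matrix

/-- Hibler's quadratic form `Δ²(d)`. -/
noncomputable def Dsq (e : ℝ) (d : Matrix (Fin 2) (Fin 2) ℝ) : ℝ :=
  (d 0 0 + d 1 1)^2 + (1/e^2)*(d 0 0 - d 1 1)^2 + (1/e^2)*(d 0 1 + d 1 0)^2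

/-- The 4×4 matrix representing Hibler's map `𝕊`. -/
noncomputable def S4 (e : ℝ) : Matrix (Fin 4) (Fin 4) ℝ :=
  !![1+1/e^2, 0, 0, 1-1/e^2;
     0, 1/e^2, 1/e^2, 0;
     0, 1/e^2, 1/e^2, 0;
     1-1/e^2, 0, 0, 1+1/e^2]

/-- Identification of a 2×2 matrix with a vector in ℝ⁴. -/
def vec4 (d : Matrix (Fin 2) (Fin 2) ℝ) : Fin 4 → ℝ := ![d 0 0, d 0 1, d 1 0, d 1 1]

/-- Pair index `(i,k) ↦ 2i+k`. -/
def pidx (i k : Fin 2) : Fin 4 := ⟨2*i.1 + k.1, by have := i.2; have := k.2; omega⟩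

/-- Hibler's tensor `𝕊_{ij}^{kl}`. -/
noncomputable def Sten (e : ℝ) (i j k l : Fin 2) : ℝ := S4 e (pidx i k) (pidx j l)

/-- The matrix `𝕊ε`. -/
noncomputable def Smap (e : ℝ) (ε : Matrix (Fin 2) (Fin 2) ℝ) : Matrix (Fin 2) (Fin 2) ℝ :=
  fun i k => ∑ j : Fin 2, ∑ l : Fin 2, Sten e i j k l * ε j l

/-- Regularized `Δ_δ(ε) = √(δ + Δ²(ε))`. -/
noncomputable def Ddel (e δ : ℝ) (ε : Matrix (Fin 2) (Fin 2) ℝ) : ℝ :=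
  Real.sqrt (δ + Dsq e ε)

/-- Principal coefficients `a_{ij}^{kl}` of Hibler's operator. -/
noncomputable def aCoef (e δ P : ℝ) (ε : Matrix (Fin 2) (Fin 2) ℝ) (i j k l : Fin 2) : ℝ :=
  P/(2*Ddel e δ ε) * (Sten e i j k l - (1/(Ddel e δ ε)^2) * Smap e ε i k * Smap e ε j l)

noncomputable def hiblerForm (e : ℝ) (d d' : Matrix (Fin 2) (Fin 2) ℝ) : ℝ :=
  (d 0 0 + d 1 1) * (d' 0 0 + d' 1 1) + (1/e^2) * (d 0 0 - d 1 1) * (d' 0 0 - d' 1 1)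
    + (1/e^2) * (d 0 1 + d 1 0) * (d' 0 1 + d' 1 0)

theorem hiblerForm_self (e : ℝ) (d : Matrix (Fin 2) (Fin 2) ℝ) : hiblerForm e d d = Dsq e d := by
  unfold hiblerForm Dsq; ring

theorem Dsq_nonneg (e : ℝ) (d : Matrix (Fin 2) (Fin 2) ℝ) : 0 ≤ Dsq e d := by
  unfold Dsq; positivity

theorem sum_Sten_mul_mul (e : ℝ) (d d' : Matrix (Fin 2) (Fin 2) ℝ) :
    ∑ i, ∑ j, ∑ k, ∑ l, Sten e i j k l * d i k * d' j l = hiblerForm e d d' := by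
  simp only [Fin.sum_univ_two, Sten, S4, hiblerForm, pidx, of_apply]
  norm_num
  ring

theorem sum_Smap_mul (e : ℝ) (ε d : Matrix (Fin 2) (Fin 2) ℝ) :
    ∑ i, ∑ k, Smap e ε i k * d i k = hiblerForm e ε d :=
  calc ∑ i, ∑ k, Smap e ε i k * d i k
      = ∑ i, ∑ j, ∑ k, ∑ l, Sten e i j k l * d i k * ε j l := by
        simp only [Smap, Fin.sum_univ_two]; ring
    _ = hiblerForm e ε d := by rw [sum_Sten_mul_mul]; unfold hiblerForm; ring

theorem sq_add_mul_add_mul_le (w a b c x y z : ℝ) (hw : 0 ≤ w) :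
    (a * x + w * b * y + w * c * z) ^ 2
      ≤ (a ^ 2 + w * b ^ 2 + w * c ^ 2) * (x ^ 2 + w * y ^ 2 + w * z ^ 2) := by
  nlinarith [mul_nonneg hw (sq_nonneg (a*y - b*x)), mul_nonneg hw (sq_nonneg (a*z - c*x)),
    mul_nonneg (mul_nonneg hw hw) (sq_nonneg (b*z - c*y))]

theorem hiblerForm_sq_le (e : ℝ) (d d' : Matrix (Fin 2) (Fin 2) ℝ) :
    hiblerForm e d d' ^ 2 ≤ Dsq e d * Dsq e d' :=
  sq_add_mul_add_mul_le (1/e^2) (d 0 0 + d 1 1) (d 0 0 - d 1 1) (d 0 1 + d 1 0)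
    (d' 0 0 + d' 1 1) (d' 0 0 - d' 1 1) (d' 0 1 + d' 1 0) (by positivity)

theorem sum_aCoef_mul_mul (e δ P : ℝ) (ε d : Matrix (Fin 2) (Fin 2) ℝ) :
    ∑ i, ∑ j, ∑ k, ∑ l, aCoef e δ P ε i j k l * d i k * d j l
      = P / (2 * Ddel e δ ε) * (Dsq e d - hiblerForm e ε d ^ 2 / Ddel e δ ε ^ 2) := by
  rw [← hiblerForm_self, ← sum_Sten_mul_mul, ← sum_Smap_mul]
  simp only [aCoef, Fin.sum_univ_two]
  ring

theorem mul_Dsq_le_sum_aCoef_mul_mul (e δ P : ℝ) (hδ : 0 < δ) (hP : 0 ≤ P)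
    (ε d : Matrix (Fin 2) (Fin 2) ℝ) :
    P * δ / (2 * Ddel e δ ε ^ 3) * Dsq e d
      ≤ ∑ i, ∑ j, ∑ k, ∑ l, aCoef e δ P ε i j k l * d i k * d j l := by
  have hΔ : 0 < Ddel e δ ε := Real.sqrt_pos.mpr (by linarith [Dsq_nonneg e ε])
  have hΔsq : Ddel e δ ε ^ 2 = δ + Dsq e ε := Real.sq_sqrt (by linarith [Dsq_nonneg e ε])
  have hcs := hiblerForm_sq_le e ε d
  rw [sum_aCoef_mul_mul]
  calc P * δ / (2 * Ddel e δ ε ^ 3) * Dsq e d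
      = P / (2 * Ddel e δ ε) * (Dsq e d - Dsq e ε * Dsq e d / Ddel e δ ε ^ 2) := by
        field_simp; rw [hΔsq]; ring
    _ ≤ _ := by gcongr

theorem sum_aCoef_mul_mul_nonneg (e δ P : ℝ) (hδ : 0 < δ) (hP : 0 ≤ P)
    (ε d : Matrix (Fin 2) (Fin 2) ℝ) :
    0 ≤ ∑ i, ∑ j, ∑ k, ∑ l, aCoef e δ P ε i j k l * d i k * d j l := by
  have := Dsq_nonneg e d
  exact le_trans (by unfold Ddel; positivity) (mul_Dsq_le_sum_aCoef_mul_mul e δ P hδ hP ε d)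

theorem re_sum_ofReal_mul_mul_conj {ι κ : Type*} [Fintype ι] [Fintype κ]
    (A : ι → ι → κ → κ → ℝ) (z : Matrix ι κ ℂ) :
    (∑ i, ∑ j, ∑ k, ∑ l, (A i j k l : ℂ) * z j l * starRingEnd ℂ (z i k)).re
      = ∑ i, ∑ j, ∑ k, ∑ l, A i j k l * (z i k).re * (z j l).re
        + ∑ i, ∑ j, ∑ k, ∑ l, A i j k l * (z i k).im * (z j l).im := by
  simp only [Complex.re_sum, ← sum_add_distrib, Complex.mul_re, Complex.mul_im,
    Complex.ofReal_re, Complex.ofReal_im, Complex.conj_re, Complex.conj_im]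
  refine sum_congr rfl fun _ _ => sum_congr rfl fun _ _ =>
    sum_congr rfl fun _ _ => sum_congr rfl fun _ _ => by ring

theorem hibler_ls_nonneg_general (e δ P : ℝ) (hδ : 0 < δ) (hP : 0 < P)
    (ε : Matrix (Fin 2) (Fin 2) ℝ)
    (ξ ν : Fin 2 → ℝ) (u v : Fin 2 → ℂ) :
    0 ≤ (∑ i : Fin 2, ∑ j : Fin 2, ∑ k : Fin 2, ∑ l : Fin 2,
        (aCoef e δ P ε i j k l : ℂ) * ((ξ l : ℂ) * u j - (ν l : ℂ) * v j)
          * (starRingEnd ℂ) ((ξ k : ℂ) * u i - (ν k : ℂ) * v i)).re := by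
  have h := re_sum_ofReal_mul_mul_conj (aCoef e δ P ε)
    (Matrix.of fun j l => (ξ l : ℂ) * u j - (ν l : ℂ) * v j)
  simp only [Matrix.of_apply] at h
  rw [h]
  exact add_nonneg (sum_aCoef_mul_mul_nonneg e δ P hδ hP.le ε _)
    (sum_aCoef_mul_mul_nonneg e δ P hδ hP.le ε _)

/-- nonnegativity in the Lopatinskii–Shapiro condition:
Re Σ a_{ij}^{kl} (ξ_l u_j − ν_l v_j) conj(ξ_k u_i − ν_k v_i) ≥ 0. -/
theorem hibler_ls_nonneg (e δ P : ℝ) (he : 0 < e) (hδ : 0 < δ) (hP : 0 < P)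
    (ε : Matrix (Fin 2) (Fin 2) ℝ) (hε : ε.IsSymm)
    (ξ ν : Fin 2 → ℝ) (hξ : ξ 0^2 + ξ 1^2 = 1) (hν : ν 0^2 + ν 1^2 = 1)
    (horth : ξ 0 * ν 0 + ξ 1 * ν 1 = 0) (u v : Fin 2 → ℂ) :
    0 ≤ (∑ i : Fin 2, ∑ j : Fin 2, ∑ k : Fin 2, ∑ l : Fin 2,
        (aCoef e δ P ε i j k l : ℂ) * ((ξ l : ℂ) * u j - (ν l : ℂ) * v j)
          * (starRingEnd ℂ) ((ξ k : ℂ) * u i - (ν k : ℂ) * v i)).re :=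
  hibler_ls_nonneg_general e δ P hδ hP ε ξ ν u v
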